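/- arXiv:2401.03927 — 5 statements merged into one kernel-verified Lean document; each statement's English description precedes it below -/
import Mathlib

section
/- For every Γ > 0, the derivative of b_Γ attains its maximum at 0, and b_Γ'(0) = (1 - e^{-Γ})/(1 + e^{-Γ}), which satisfies b_Γ'(0) ≤ exp(-e^{-Γ}) < 1. Consequently b_Γ is a strict contraction: |b_Γ(x) - b_Γ(y)| ≤ exp(-e^{-Γ})·|x - y| for all x, y. -/
/-!
With `u = e^{-Γ-y}` and `v = e^{-Γ+y}` one has `b_Γ'(y) = 1 - u/(1+u) - v/(1+v)` and
`uv = ε²`, `ε = e^{-Γ}`. Among positive pairs with `uv = ε² ≤ 1`, the sum `u/(1+u) + v/(1+v)`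
is smallest when `u = v = ε` (that is, `y = 0`) and never exceeds `1`, so
`0 ≤ b_Γ' ≤ b_Γ'(0) = (1-ε)/(1+ε) ≤ 1 - ε ≤ e^{-ε}`, and the mean value theorem gives the
contraction estimate.
-/

open Real

noncomputable def bGamma (Γ y : ℝ) : ℝ :=
  y + log ((1 + exp (-Γ - y)) / (1 + exp (-Γ + y)))

section Algebra

variable {u v ε : ℝ}

lemma div_one_add_add_div_one_add_le_one (hu : 0 < u) (hv : 0 < v) (huv : u * v ≤ 1) :
    u / (1 + u) + v / (1 + v) ≤ 1 := by
  rw [div_add_div _ _ (by positivity) (by positivity), div_le_one (by positivity)]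
  nlinarith

lemma two_mul_div_one_add_le_div_one_add_add (hε₀ : 0 ≤ ε) (hε₁ : ε ≤ 1) (hu : 0 < u)
    (hv : 0 < v) (huv : u * v = ε ^ 2) : 2 * ε / (1 + ε) ≤ u / (1 + u) + v / (1 + v) := by
  have hsum : 2 * ε ≤ u + v := by nlinarith [sq_nonneg (u - v)]
  rw [div_add_div _ _ (by positivity) (by positivity), div_le_div_iff₀ (by positivity)
    (by positivity)]
  nlinarith [mul_nonneg (sub_nonneg.2 hε₁) (sub_nonneg.2 hsum)]

lemma one_sub_div_one_add_le_exp_neg (hε : 0 ≤ ε) : (1 - ε) / (1 + ε) ≤ exp (-ε) := by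
  rw [div_le_iff₀ (by positivity)]
  nlinarith [add_one_le_exp (-ε), mul_nonneg hε (exp_pos (-ε)).le]

end Algebra

lemma hasDerivAt_log_one_add_exp (x : ℝ) :
    HasDerivAt (fun x => log (1 + exp x)) (exp x / (1 + exp x)) x := by
  simpa using ((hasDerivAt_exp x).const_add 1).log (by positivity)

section bGamma

variable (Γ : ℝ)

lemma hasDerivAt_bGamma (y : ℝ) :
    HasDerivAt (bGamma Γ)
      (1 - exp (-Γ - y) / (1 + exp (-Γ - y)) - exp (-Γ + y) / (1 + exp (-Γ + y))) y := by
  have hsplit : bGamma Γ = fun z => z + (log (1 + exp (-Γ - z)) - log (1 + exp (-Γ + z))) := by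
    funext z
    rw [bGamma, log_div (by positivity) (by positivity)]
  have hminus := (hasDerivAt_log_one_add_exp (-Γ - y)).comp y ((hasDerivAt_id' y).const_sub (-Γ))
  have hplus := (hasDerivAt_log_one_add_exp (-Γ + y)).comp y ((hasDerivAt_id' y).const_add (-Γ))
  rw [hsplit]
  exact ((hasDerivAt_id' y).add (hminus.sub hplus)).congr_deriv (by ring)

lemma deriv_bGamma (y : ℝ) : deriv (bGamma Γ) y =
    1 - exp (-Γ - y) / (1 + exp (-Γ - y)) - exp (-Γ + y) / (1 + exp (-Γ + y)) :=
  (hasDerivAt_bGamma Γ y).deriv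

lemma deriv_bGamma_zero : deriv (bGamma Γ) 0 = (1 - exp (-Γ)) / (1 + exp (-Γ)) := by
  rw [deriv_bGamma, sub_zero, add_zero]
  field_simp
  ring

variable {Γ}

lemma exp_neg_sub_mul_exp_neg_add (y : ℝ) : exp (-Γ - y) * exp (-Γ + y) = exp (-Γ) ^ 2 := by
  rw [← exp_add, sq, ← exp_add]
  ring_nf

lemma deriv_bGamma_le_deriv_zero (hΓ : 0 ≤ Γ) (y : ℝ) :
    deriv (bGamma Γ) y ≤ deriv (bGamma Γ) 0 := by
  have hmin := two_mul_div_one_add_le_div_one_add_add (exp_pos _).le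
    (exp_le_one_iff.2 (neg_nonpos.2 hΓ)) (exp_pos _) (exp_pos _) (exp_neg_sub_mul_exp_neg_add y)
  have hzero : (1 - exp (-Γ)) / (1 + exp (-Γ)) = 1 - 2 * exp (-Γ) / (1 + exp (-Γ)) := by
    field_simp
    ring
  rw [deriv_bGamma, deriv_bGamma_zero, hzero]
  linarith

lemma deriv_bGamma_nonneg (hΓ : 0 ≤ Γ) (y : ℝ) : 0 ≤ deriv (bGamma Γ) y := by
  have hprod : exp (-Γ - y) * exp (-Γ + y) ≤ 1 := by
    rw [exp_neg_sub_mul_exp_neg_add]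
    exact pow_le_one₀ (exp_pos _).le (exp_le_one_iff.2 (neg_nonpos.2 hΓ))
  have hmax := div_one_add_add_div_one_add_le_one (exp_pos _) (exp_pos _) hprod
  rw [deriv_bGamma]
  linarith

end bGamma

/-- The derivative of `b_Γ` attains its maximum at `0`, where it equals
`(1 - e^{-Γ})/(1 + e^{-Γ}) ≤ exp(-e^{-Γ}) < 1`; consequently `b_Γ` is a
strict contraction with constant `exp(-e^{-Γ})`. -/
theorem stmt_2 (Γ : ℝ) (hΓ : 0 < Γ) (b : ℝ → ℝ)
    (hb : b = fun y => y + Real.log ((1 + Real.exp (-Γ - y)) / (1 + Real.exp (-Γ + y)))) :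
    (∀ x, deriv b x ≤ deriv b 0) ∧
    deriv b 0 = (1 - Real.exp (-Γ)) / (1 + Real.exp (-Γ)) ∧
    deriv b 0 ≤ Real.exp (-Real.exp (-Γ)) ∧
    Real.exp (-Real.exp (-Γ)) < 1 ∧
    ∀ x y, |b x - b y| ≤ Real.exp (-Real.exp (-Γ)) * |x - y| := by
  obtain rfl : b = bGamma Γ := hb
  have hmax := deriv_bGamma_le_deriv_zero hΓ.le
  have hbound : deriv (bGamma Γ) 0 ≤ exp (-exp (-Γ)) :=
    deriv_bGamma_zero Γ ▸ one_sub_div_one_add_le_exp_neg (exp_pos _).le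
  refine ⟨hmax, deriv_bGamma_zero Γ, hbound, exp_lt_one_iff.2 (neg_neg_of_pos (exp_pos _)),
    fun x y => ?_⟩
  have habs (z : ℝ) : ‖deriv (bGamma Γ) z‖ ≤ exp (-exp (-Γ)) := by
    rw [norm_of_nonneg (deriv_bGamma_nonneg hΓ.le z)]
    exact (hmax z).trans hbound
  simpa only [norm_eq_abs] using convex_univ.norm_image_sub_le_of_norm_deriv_le
    (fun z _ => (hasDerivAt_bGamma Γ z).differentiableAt) (fun z _ => habs z)
    (Set.mem_univ y) (Set.mem_univ x)
end

section
/- For any real numbers h_n, h_{n+1}, ..., h_m (with n ≤ m), the m−n+1 fold composition f_{h_m} ∘ f_{h_{m-1}} ∘ ⋯ ∘ f_{h_n} satisfies the uniform contraction estimate: for all x, y ∈ [-Γ, Γ], |f_{h_m}∘⋯∘f_{h_n}(x) − f_{h_m}∘⋯∘f_{h_n}(y)| ≤ 2Γ·exp(−ε(m−n+1)), where ε = e^{-Γ}. -/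
/-- The one-step map `f_h` of the projective chain. -/
noncomputable def fh (Γ h y : ℝ) : ℝ :=
  y + 2 * h + Real.log ((1 + Real.exp (-Γ - (y + 2 * h))) / (1 + Real.exp (-Γ + (y + 2 * h))))

/-- `iterComp Γ h n k x = f_{h (n+k)} ∘ ⋯ ∘ f_{h n} (x)`. -/
noncomputable def iterComp (Γ : ℝ) (h : ℕ → ℝ) (n : ℕ) : ℕ → ℝ → ℝ
  | 0, x => fh Γ (h n) x
  | k + 1, x => fh Γ (h (n + k + 1)) (iterComp Γ h n k x)

/-! With `ε = e^{-Γ}`, `a = e^{-Γ-(y+2h)}` and `b = e^{-Γ+(y+2h)}` one has `ab = ε²` and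
`f_h'(y) = (1 - ε²) / ((1 + a)(1 + b))`. By AM-GM `(1 + a)(1 + b) ≥ (1 + ε)²`, so
`0 ≤ f_h' ≤ (1 - ε)/(1 + ε) ≤ 1 - ε ≤ e^{-ε}`: every `f_h` is `e^{-ε}`-Lipschitz, a composition of
`m - n + 1` of them is `e^{-ε(m-n+1)}`-Lipschitz, and two points of `[-Γ, Γ]` are at most `2Γ` apart. -/

open Real NNReal

noncomputable def fhDeriv (Γ c y : ℝ) : ℝ :=
  (1 - exp (-Γ) ^ 2) / ((1 + exp (-Γ - (y + 2 * c))) * (1 + exp (-Γ + (y + 2 * c))))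

lemma hasDerivAt_fh (Γ c y : ℝ) : HasDerivAt (fh Γ c) (fhDeriv Γ c y) y := by
  set a := exp (-Γ - (y + 2 * c))
  set b := exp (-Γ + (y + 2 * c))
  have ha : 0 < 1 + a := by positivity
  have hb : 0 < 1 + b := by positivity
  have hu : HasDerivAt (fun y : ℝ => y + 2 * c) 1 y := (hasDerivAt_id y).add_const _
  have hA : HasDerivAt (fun y => log (1 + exp (-Γ - (y + 2 * c)))) (-a / (1 + a)) y := by
    simpa using (((hu.const_sub (-Γ)).exp).const_add 1).log ha.ne'
  have hB : HasDerivAt (fun y => log (1 + exp (-Γ + (y + 2 * c)))) (b / (1 + b)) y := by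
    simpa using (((hu.const_add (-Γ)).exp).const_add 1).log hb.ne'
  have hfh : fh Γ c = fun y => y + 2 * c + (log (1 + exp (-Γ - (y + 2 * c))) -
      log (1 + exp (-Γ + (y + 2 * c)))) := by
    funext z
    rw [fh, log_div (by positivity) (by positivity)]
  have hab : a * b = exp (-Γ) ^ 2 := by
    rw [← exp_add, sq, ← exp_add]; ring_nf
  rw [hfh]
  refine (hu.add (hA.sub hB)).congr_deriv ?_
  rw [fhDeriv, ← hab]
  field_simp
  ring

lemma div_one_add_mul_one_add_le {ε a b : ℝ} (hε₀ : 0 ≤ ε) (hε₁ : ε ≤ 1) (ha : 0 < a)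
    (hb : 0 < b) (hab : a * b = ε ^ 2) :
    (1 - ε ^ 2) / ((1 + a) * (1 + b)) ≤ (1 - ε) / (1 + ε) := by
  have hamgm : 2 * ε ≤ a + b := by nlinarith [sq_nonneg (a - b)]
  calc (1 - ε ^ 2) / ((1 + a) * (1 + b)) ≤ (1 - ε ^ 2) / (1 + ε) ^ 2 :=
        div_le_div_of_nonneg_left (by nlinarith) (by positivity) (by nlinarith)
    _ = (1 - ε) / (1 + ε) := by field_simp; ring

lemma fhDeriv_nonneg {Γ : ℝ} (hΓ : 0 ≤ Γ) (c y : ℝ) : 0 ≤ fhDeriv Γ c y := by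
  have hε : exp (-Γ) ≤ 1 := exp_le_one_iff.mpr (by linarith)
  have hnum : 0 ≤ 1 - exp (-Γ) ^ 2 := by nlinarith [exp_pos (-Γ)]
  unfold fhDeriv
  positivity

lemma fhDeriv_le {Γ : ℝ} (hΓ : 0 ≤ Γ) (c y : ℝ) : fhDeriv Γ c y ≤ exp (-exp (-Γ)) := by
  set ε := exp (-Γ)
  have hε₀ : 0 < ε := exp_pos _
  have hε₁ : ε ≤ 1 := exp_le_one_iff.mpr (by linarith)
  have hab : exp (-Γ - (y + 2 * c)) * exp (-Γ + (y + 2 * c)) = ε ^ 2 := by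
    rw [← exp_add, sq, ← exp_add]; ring_nf
  calc fhDeriv Γ c y ≤ (1 - ε) / (1 + ε) :=
        div_one_add_mul_one_add_le hε₀.le hε₁ (exp_pos _) (exp_pos _) hab
    _ ≤ 1 - ε := div_le_self (by linarith) (by linarith)
    _ ≤ exp (-ε) := by linarith [add_one_le_exp (-ε)]

lemma lipschitzWith_fh {Γ : ℝ} (hΓ : 0 ≤ Γ) (c : ℝ) :
    LipschitzWith (⟨exp (-exp (-Γ)), (exp_pos _).le⟩ : ℝ≥0) (fh Γ c) := by
  refine lipschitzWith_of_nnnorm_deriv_le (fun y => (hasDerivAt_fh Γ c y).differentiableAt)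
    fun y => ?_
  change ‖deriv (fh Γ c) y‖ ≤ exp (-exp (-Γ))
  rw [(hasDerivAt_fh Γ c y).deriv, norm_of_nonneg (fhDeriv_nonneg hΓ c y)]
  exact fhDeriv_le hΓ c y

lemma lipschitzWith_iterComp {Γ : ℝ} {K : ℝ≥0} (hK : ∀ c, LipschitzWith K (fh Γ c))
    (h : ℕ → ℝ) (n k : ℕ) : LipschitzWith (K ^ (k + 1)) (iterComp Γ h n k) := by
  induction k with
  | zero => simpa [iterComp] using hK (h n)
  | succ k ih =>
    rw [pow_succ']
    exact (hK (h (n + k + 1))).comp ih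

theorem stmt_3_general (Γ : ℝ) (h : ℕ → ℝ) (n m : ℕ) (hnm : n ≤ m)
    (x y : ℝ) (hx : x ∈ Set.Icc (-Γ) Γ) (hy : y ∈ Set.Icc (-Γ) Γ) :
    |iterComp Γ h n (m - n) x - iterComp Γ h n (m - n) y| ≤
      2 * Γ * Real.exp (-(Real.exp (-Γ)) * ((m : ℝ) - (n : ℝ) + 1)) := by
  have hΓ : 0 ≤ Γ := by linarith [hx.1, hx.2]
  have hxy : dist x y ≤ 2 * Γ := by linarith [Real.dist_le_of_mem_Icc hx hy]
  have hpow : exp (-exp (-Γ)) ^ (m - n + 1) = exp (-exp (-Γ) * ((m : ℝ) - n + 1)) := by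
    rw [← exp_nat_mul]
    push_cast [Nat.cast_sub hnm]
    ring_nf
  rw [← Real.dist_eq, mul_comm, ← hpow]
  calc dist (iterComp Γ h n (m - n) x) (iterComp Γ h n (m - n) y)
      ≤ exp (-exp (-Γ)) ^ (m - n + 1) * dist x y := by
        exact_mod_cast (lipschitzWith_iterComp (lipschitzWith_fh hΓ) h n (m - n)).dist_le_mul x y
    _ ≤ exp (-exp (-Γ)) ^ (m - n + 1) * (2 * Γ) := by gcongr

/-- Uniform contraction of the `(m-n+1)`-fold composition `f_{h_m} ∘ ⋯ ∘ f_{h_n}`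
on `[-Γ, Γ]`, with rate `ε = e^{-Γ}` per step. -/
theorem stmt_3 (Γ : ℝ) (hΓ : 0 < Γ) (h : ℕ → ℝ) (n m : ℕ) (hnm : n ≤ m)
    (x y : ℝ) (hx : x ∈ Set.Icc (-Γ) Γ) (hy : y ∈ Set.Icc (-Γ) Γ) :
    |iterComp Γ h n (m - n) x - iterComp Γ h n (m - n) y| ≤
      2 * Γ * Real.exp (-(Real.exp (-Γ)) * ((m : ℝ) - (n : ℝ) + 1)) :=
  stmt_3_general Γ h n m hnm x y hx hy
end

section
/- Let (l_j) satisfy l_{j+1} = f_{h_{j+1}}(l_j) and let S_n = h_1 + ⋯ + h_n (with S_0 = 0). Then for all n_0 ≤ n: l_n ≤ log( e^{l_{n_0} + 2(S_n − S_{n_0})} + e^{-Γ} · Σ_{k=n_0+1}^{n} e^{-2(S_k − S_n)} ), with the empty sum equal to 0. -/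
lemma fh_step (Γ h y : ℝ) :
    Real.exp (fh Γ h y) ≤ Real.exp (y + 2 * h) + Real.exp (-Γ) := by
  set x := y + 2 * h with hx
  have hd : (0:ℝ) < 1 + Real.exp (-Γ + x) := by positivity
  have hnn : (0:ℝ) < 1 + Real.exp (-Γ - x) := by positivity
  have heq : Real.exp (fh Γ h y)
      = Real.exp x * ((1 + Real.exp (-Γ - x)) / (1 + Real.exp (-Γ + x))) := by
    rw [fh, Real.exp_add, Real.exp_log (by positivity)]
  rw [heq]
  have hratio : (1 + Real.exp (-Γ - x)) / (1 + Real.exp (-Γ + x)) ≤ 1 + Real.exp (-Γ - x) := by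
    apply div_le_self hnn.le
    linarith [Real.exp_pos (-Γ + x)]
  calc Real.exp x * ((1 + Real.exp (-Γ - x)) / (1 + Real.exp (-Γ + x)))
      ≤ Real.exp x * (1 + Real.exp (-Γ - x)) :=
        mul_le_mul_of_nonneg_left hratio (Real.exp_pos x).le
    _ = Real.exp x + Real.exp (-Γ) := by
        rw [mul_add, mul_one, ← Real.exp_add]; ring_nf

/-- Upper bound for the chain `l` in terms of the driving walk `S`:
for `n₀ ≤ n`, `l_n ≤ log( e^{l_{n₀} + 2(S_n − S_{n₀})} + e^{-Γ} Σ_{k=n₀+1}^n e^{-2(S_k − S_n)} )`. -/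
theorem stmt_5 (Γ : ℝ) (hΓ : 0 < Γ) (h : ℕ → ℝ) (l S : ℕ → ℝ)
    (hrec : ∀ j, l (j + 1) = fh Γ (h (j + 1)) (l j))
    (hS0 : S 0 = 0) (hSrec : ∀ n, S (n + 1) = S n + h (n + 1))
    (n0 n : ℕ) (hn : n0 ≤ n) :
    l n ≤ Real.log (Real.exp (l n0 + 2 * (S n - S n0)) +
      Real.exp (-Γ) * ∑ k ∈ Finset.Icc (n0 + 1) n, Real.exp (-2 * (S k - S n))) := by
  have key : ∀ m, n0 ≤ m → Real.exp (l m) ≤ Real.exp (l n0 + 2 * (S m - S n0)) +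
      Real.exp (-Γ) * ∑ k ∈ Finset.Icc (n0 + 1) m, Real.exp (-2 * (S k - S m)) := by
    intro m hm
    induction m, hm using Nat.le_induction with
    | base =>
        simp [Finset.Icc_eq_empty_of_lt (Nat.lt_succ_self n0)]
    | succ m hm ih =>
        have hsum : ∑ k ∈ Finset.Icc (n0 + 1) (m + 1), Real.exp (-2 * (S k - S (m + 1)))
            = Real.exp (2 * h (m + 1)) *
              (∑ k ∈ Finset.Icc (n0 + 1) m, Real.exp (-2 * (S k - S m))) + 1 := by
          rw [Finset.sum_Icc_succ_top (Nat.succ_le_succ hm), Finset.mul_sum]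
          congr 1
          · apply Finset.sum_congr rfl
            intro k _
            rw [← Real.exp_add, hSrec m]; ring_nf
          · simp
        have step := fh_step Γ (h (m + 1)) (l m)
        rw [← hrec m] at step
        have h2 : Real.exp (l m + 2 * h (m + 1)) = Real.exp (l m) * Real.exp (2 * h (m + 1)) := by
          rw [← Real.exp_add]
        have hEpos := Real.exp_pos (2 * h (m + 1))
        have hfirst : Real.exp (l n0 + 2 * (S (m + 1) - S n0))
            = Real.exp (l n0 + 2 * (S m - S n0)) * Real.exp (2 * h (m + 1)) := by
          rw [← Real.exp_add, hSrec m]; ring_nf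
        calc Real.exp (l (m + 1)) ≤ Real.exp (l m) * Real.exp (2 * h (m + 1)) + Real.exp (-Γ) := by
              rw [← h2]; exact step
          _ ≤ (Real.exp (l n0 + 2 * (S m - S n0)) +
                Real.exp (-Γ) * ∑ k ∈ Finset.Icc (n0 + 1) m, Real.exp (-2 * (S k - S m)))
                * Real.exp (2 * h (m + 1)) + Real.exp (-Γ) := by
              gcongr
          _ = Real.exp (l n0 + 2 * (S (m + 1) - S n0)) +
                Real.exp (-Γ) * ∑ k ∈ Finset.Icc (n0 + 1) (m + 1),
                  Real.exp (-2 * (S k - S (m + 1))) := by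
              rw [hsum, hfirst]; ring
  have hk := key n hn
  have hpos : 0 < Real.exp (l n0 + 2 * (S n - S n0)) +
      Real.exp (-Γ) * ∑ k ∈ Finset.Icc (n0 + 1) n, Real.exp (-2 * (S k - S n)) :=
    lt_of_lt_of_le (Real.exp_pos _) hk
  calc l n = Real.log (Real.exp (l n)) := (Real.log_exp _).symm
    _ ≤ _ := Real.log_le_log (Real.exp_pos _) hk
end

section
/- Let (l_j) satisfy l_{j+1} = f_{h_{j+1}}(l_j) with S_n the associated partial sums. Then for all n_0 ≤ n: l_n ≥ −log( e^{−(l_{n_0} + 2(S_n − S_{n_0}))} + e^{-Γ} · Σ_{k=n_0+1}^{n} e^{2(S_k − S_n)} ), with the empty sum equal to 0. -/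
lemma fh_exp_le (Γ h y : ℝ) :
    Real.exp (-(fh Γ h y)) ≤ Real.exp (-(2 * h)) * Real.exp (-y) + Real.exp (-Γ) := by
  set z := y + 2 * h with hz
  have hN : (0:ℝ) < 1 + Real.exp (-Γ - z) := by positivity
  have hD : (0:ℝ) < 1 + Real.exp (-Γ + z) := by positivity
  have hfh : fh Γ h y = z + Real.log ((1 + Real.exp (-Γ - z)) / (1 + Real.exp (-Γ + z))) := rfl
  rw [hfh, neg_add, Real.exp_add, ← Real.log_inv, Real.exp_log (by positivity)]
  have h1 : Real.exp (-z) * ((1 + Real.exp (-Γ - z)) / (1 + Real.exp (-Γ + z)))⁻¹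
      = (Real.exp (-z) * (1 + Real.exp (-Γ + z))) / (1 + Real.exp (-Γ - z)) := by
    field_simp
  rw [h1]
  have h2 : Real.exp (-z) * (1 + Real.exp (-Γ + z)) = Real.exp (-(2*h)) * Real.exp (-y) + Real.exp (-Γ) := by
    rw [mul_add, mul_one, ← Real.exp_add, ← Real.exp_add, hz]
    ring_nf
  calc (Real.exp (-z) * (1 + Real.exp (-Γ + z))) / (1 + Real.exp (-Γ - z))
      ≤ Real.exp (-z) * (1 + Real.exp (-Γ + z)) := by
        apply div_le_self (by positivity)
        linarith [Real.exp_pos (-Γ - z)]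
    _ = _ := h2

/-- Lower bound for the chain `l` in terms of the driving walk `S`:
for `n₀ ≤ n`, `l_n ≥ −log( e^{−(l_{n₀} + 2(S_n − S_{n₀}))} + e^{-Γ} Σ_{k=n₀+1}^n e^{2(S_k − S_n)} )`. -/
theorem stmt_6 (Γ : ℝ) (hΓ : 0 < Γ) (h : ℕ → ℝ) (l S : ℕ → ℝ)
    (hrec : ∀ j, l (j + 1) = fh Γ (h (j + 1)) (l j))
    (hS0 : S 0 = 0) (hSrec : ∀ n, S (n + 1) = S n + h (n + 1))
    (n0 n : ℕ) (hn : n0 ≤ n) :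
    l n ≥ -Real.log (Real.exp (-(l n0 + 2 * (S n - S n0))) +
      Real.exp (-Γ) * ∑ k ∈ Finset.Icc (n0 + 1) n, Real.exp (2 * (S k - S n))) := by
  have hA : ∀ m, n0 ≤ m → Real.exp (-(l m)) ≤
      Real.exp (-(l n0 + 2 * (S m - S n0))) +
      Real.exp (-Γ) * ∑ k ∈ Finset.Icc (n0 + 1) m, Real.exp (2 * (S k - S m)) := by
    intro m hm
    induction m with
    | zero =>
      have : n0 = 0 := Nat.le_zero.mp hm
      subst this
      simp
    | succ m ih =>
      rcases Nat.lt_or_ge m n0 with hlt | hle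
      · have hEq : n0 = m + 1 := le_antisymm hm hlt
        subst hEq
        rw [Finset.Icc_eq_empty (by omega)]
        simp
      · have step : Real.exp (-(l (m+1))) ≤
            Real.exp (-(2 * h (m+1))) * Real.exp (-(l m)) + Real.exp (-Γ) := by
          rw [hrec m]; exact fh_exp_le Γ (h (m+1)) (l m)
        have ihm := ih hle
        calc Real.exp (-(l (m+1)))
            ≤ Real.exp (-(2 * h (m+1))) * Real.exp (-(l m)) + Real.exp (-Γ) := step
          _ ≤ Real.exp (-(2 * h (m+1))) *
                (Real.exp (-(l n0 + 2 * (S m - S n0))) +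
                 Real.exp (-Γ) * ∑ k ∈ Finset.Icc (n0 + 1) m, Real.exp (2 * (S k - S m)))
              + Real.exp (-Γ) := by gcongr
          _ = _ := by
              rw [Finset.sum_Icc_succ_top (by omega : n0 + 1 ≤ m + 1)]
              rw [hSrec m]
              have hsum : ∑ k ∈ Finset.Icc (n0+1) m, Real.exp (2 * (S k - (S m + h (m+1))))
                  = ∑ k ∈ Finset.Icc (n0+1) m,
                      Real.exp (-(2 * h (m+1))) * Real.exp (2 * (S k - S m)) := by
                refine Finset.sum_congr rfl fun k _ => ?_
                rw [← Real.exp_add]; ring_nf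
              rw [hsum, ← Finset.mul_sum]
              have e1 : Real.exp (-(2 * h (m+1))) * Real.exp (-(l n0 + 2 * (S m - S n0)))
                  = Real.exp (-(l n0 + 2 * (S m + h (m+1) - S n0))) := by
                rw [← Real.exp_add]; ring_nf
              have e2 : S m + h (m+1) - (S m + h (m+1)) = 0 := by ring
              rw [e2, mul_zero, Real.exp_zero, ← e1]
              ring
  have hineq := hA n hn
  have hpos : (0:ℝ) < Real.exp (-(l n0 + 2 * (S n - S n0))) +
      Real.exp (-Γ) * ∑ k ∈ Finset.Icc (n0 + 1) n, Real.exp (2 * (S k - S n)) := by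
    have hsumnn : (0:ℝ) ≤ ∑ k ∈ Finset.Icc (n0 + 1) n, Real.exp (2 * (S k - S n)) :=
      Finset.sum_nonneg fun k _ => (Real.exp_pos _).le
    have := Real.exp_pos (-(l n0 + 2 * (S n - S n0)))
    have := (Real.exp_pos (-Γ)).le
    nlinarith
  have hlog := Real.log_le_log (Real.exp_pos _) hineq
  rw [Real.log_exp] at hlog
  linarith
end

section
/- For the finite-volume zero-temperature Ising chain on a segment ⟦ℓ, n⟧ with left boundary spin a ∈ {−1, +1}, the reflected recursion started at aΓ computes the difference of maximal Hamiltonian values: \widehat{l}_{ℓ,n}^{(a)} = max over σ ∈ {−1,+1}^{⟦ℓ,n⟧} of H^{a+}_{ℓ,n,J,h}(σ) minus max over σ of H^{a−}_{ℓ,n,J,h}(σ), where \widehat{l}^{(a)}_{ℓ,ℓ−1} = aΓ and \widehat{l}^{(a)}_{ℓ,m} = clamp(\widehat{l}^{(a)}_{ℓ,m−1} + 2h_m, −Γ, Γ). -/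
/-!
Write `M_n(b)` for the maximum of `H^{ab}_{ℓ,n}`. Conditioning on the last spin `s = σ_{n+1}`
gives the dynamic-programming recursion `M_{n+1}(b) = max_s (M_n(s) + (J b + h_{n+1}) s)`.
Hence `M_{n+1}(+) - M_{n+1}(-)` is a piecewise-linear function of
`x = M_n(+) - M_n(-) + 2 h_{n+1}` which, since `Γ = 2J ≥ 0`, is exactly the clamp of `x` to
`[-Γ, Γ]`. On the empty chain `n = ℓ - 1` the difference is `Ja - (-Ja) = aΓ`.
-/

/-- Hard-wall projection onto `[-Γ, Γ]`. -/
noncomputable def hatb (Γ x : ℝ) : ℝ := max (-Γ) (min Γ x)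

/-- The Hamiltonian `H^{ab}_{ℓ,n,J,h}(σ)` of the Ising chain on `⟦ℓ, n⟧` with
boundary spins `σ_{ℓ-1} = a` and `σ_{n+1} = b`. -/
noncomputable def ham (J : ℝ) (h : ℤ → ℝ) (ℓ n : ℤ) (a b : ℝ) (σ : ℤ → ℝ) : ℝ :=
  let σ' : ℤ → ℝ := fun m => if m = ℓ - 1 then a else if m = n + 1 then b else σ m
  J * ∑ m ∈ Finset.Icc ℓ (n + 1), σ' (m - 1) * σ' m + ∑ m ∈ Finset.Icc ℓ n, h m * σ' m

/-- The maximal value of the Hamiltonian over spin configurations. -/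
noncomputable def maxHam (J : ℝ) (h : ℤ → ℝ) (ℓ n : ℤ) (a b : ℝ) : ℝ :=
  sSup {x | ∃ σ : ℤ → ℝ, (∀ m, σ m = 1 ∨ σ m = -1) ∧ x = ham J h ℓ n a b σ}

theorem csSup_image_add_const {α : Type*} [ConditionallyCompleteLattice α] [AddGroup α]
    [AddRightMono α] {S : Set α} (hne : S.Nonempty) (hbdd : BddAbove S) (c : α) :
    sSup ((· + c) '' S) = sSup S + c :=
  ((OrderIso.addRight c).map_csSup' hne hbdd).symm

theorem csSup_image_sub_const {α : Type*} [ConditionallyCompleteLattice α] [AddGroup α]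
    [AddRightMono α] {S : Set α} (hne : S.Nonempty) (hbdd : BddAbove S) (c : α) :
    sSup ((· - c) '' S) = sSup S - c :=
  ((OrderIso.subRight c).map_csSup' hne hbdd).symm

theorem hatb_two_mul_eq_max_sub_max {J : ℝ} (hJ : 0 ≤ J) (M₁ M₂ c : ℝ) :
    hatb (2 * J) (M₁ - M₂ + 2 * c)
      = max (M₁ + (J + c)) (M₂ - (J + c)) - max (M₁ + (-J + c)) (M₂ - (-J + c)) := by
  simp only [hatb, max_def, min_def]
  split_ifs <;> linarith

noncomputable def withBoundary (ℓ n : ℤ) (a b : ℝ) (σ : ℤ → ℝ) : ℤ → ℝ :=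
  fun m => if m = ℓ - 1 then a else if m = n + 1 then b else σ m

noncomputable def chainEnergy (J : ℝ) (h : ℤ → ℝ) (ℓ n : ℤ) (τ : ℤ → ℝ) : ℝ :=
  J * ∑ m ∈ Finset.Icc ℓ (n + 1), τ (m - 1) * τ m + ∑ m ∈ Finset.Icc ℓ n, h m * τ m

section IsingChain

variable (J : ℝ) (h : ℤ → ℝ) (ℓ n : ℤ) (a b : ℝ)

theorem ham_eq_chainEnergy (σ : ℤ → ℝ) :
    ham J h ℓ n a b σ = chainEnergy J h ℓ n (withBoundary ℓ n a b σ) := rfl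

theorem chainEnergy_congr {τ τ' : ℤ → ℝ} (hτ : ∀ m ∈ Finset.Icc (ℓ - 1) (n + 1), τ m = τ' m) :
    chainEnergy J h ℓ n τ = chainEnergy J h ℓ n τ' := by
  have hτ' : ∀ m, ℓ - 1 ≤ m → m ≤ n + 1 → τ m = τ' m := fun m h₁ h₂ =>
    hτ m (Finset.mem_Icc.2 ⟨h₁, h₂⟩)
  unfold chainEnergy
  have hbond : ∀ m ∈ Finset.Icc ℓ (n + 1), τ (m - 1) * τ m = τ' (m - 1) * τ' m := by
    intro m hm
    rw [Finset.mem_Icc] at hm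
    rw [hτ' (m - 1) (by omega) (by omega), hτ' m (by omega) (by omega)]
  have hfield : ∀ m ∈ Finset.Icc ℓ n, h m * τ m = h m * τ' m := by
    intro m hm
    rw [Finset.mem_Icc] at hm
    rw [hτ' m (by omega) (by omega)]
  rw [Finset.sum_congr rfl hbond, Finset.sum_congr rfl hfield]

theorem chainEnergy_add_one (hn : ℓ - 1 ≤ n) (τ : ℤ → ℝ) :
    chainEnergy J h ℓ (n + 1) τ
      = chainEnergy J h ℓ n τ + J * (τ (n + 1) * τ (n + 2)) + h (n + 1) * τ (n + 1) := by
  unfold chainEnergy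
  rw [← Finset.insert_Icc_right_eq_Icc_add_one (by omega : ℓ ≤ n + 1 + 1),
    ← Finset.insert_Icc_right_eq_Icc_add_one (by omega : ℓ ≤ n + 1),
    Finset.sum_insert (by simp), Finset.sum_insert (by simp), Finset.sum_insert (by simp),
    show n + 1 + 1 - 1 = n + 1 by ring, show n + 1 + 1 = n + 2 by ring]
  ring

theorem ham_of_eq_sub_one (σ : ℤ → ℝ) : ham J h ℓ (ℓ - 1) a b σ = J * (a * b) := by
  simp [ham_eq_chainEnergy, chainEnergy, withBoundary, show ℓ ≠ ℓ - 1 by omega]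

theorem ham_add_one (hn : ℓ - 1 ≤ n) (σ : ℤ → ℝ) :
    ham J h ℓ (n + 1) a b σ
      = ham J h ℓ n a (σ (n + 1)) σ + (J * b + h (n + 1)) * σ (n + 1) := by
  have hbulk : ∀ m ∈ Finset.Icc (ℓ - 1) (n + 1),
      withBoundary ℓ (n + 1) a b σ m = withBoundary ℓ n a (σ (n + 1)) σ m := by
    intro m hm
    rw [Finset.mem_Icc] at hm
    unfold withBoundary
    split_ifs <;> first | omega | (subst_vars; rfl)
  have hsite : withBoundary ℓ (n + 1) a b σ (n + 1) = σ (n + 1) := by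
    simp [withBoundary, show n + 1 ≠ ℓ - 1 by omega]
  have hright : withBoundary ℓ (n + 1) a b σ (n + 2) = b := by
    simp [withBoundary, show n + 2 = n + 1 + 1 by ring, show n + 1 + 1 ≠ ℓ - 1 by omega]
  rw [ham_eq_chainEnergy, chainEnergy_add_one J h ℓ n hn, chainEnergy_congr J h ℓ n hbulk,
    hsite, hright, ← ham_eq_chainEnergy]
  ring

theorem ham_congr {σ σ' : ℤ → ℝ} (hσ : ∀ m ∈ Finset.Icc ℓ n, σ m = σ' m) :
    ham J h ℓ n a b σ = ham J h ℓ n a b σ' := by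
  rw [ham_eq_chainEnergy, ham_eq_chainEnergy]
  refine chainEnergy_congr J h ℓ n fun m hm => ?_
  unfold withBoundary
  split_ifs with h₁ h₂
  · rfl
  · rfl
  · rw [Finset.mem_Icc] at hm
    exact hσ m (Finset.mem_Icc.2 (by omega))

def hamValues : Set ℝ :=
  {x | ∃ σ : ℤ → ℝ, (∀ m, σ m = 1 ∨ σ m = -1) ∧ x = ham J h ℓ n a b σ}

theorem maxHam_eq_sSup_hamValues : maxHam J h ℓ n a b = sSup (hamValues J h ℓ n a b) := rfl

theorem hamValues_nonempty : (hamValues J h ℓ n a b).Nonempty :=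
  ⟨_, fun _ => 1, fun _ => Or.inl rfl, rfl⟩

theorem hamValues_of_eq_sub_one : hamValues J h ℓ (ℓ - 1) a b = {J * (a * b)} := by
  ext x
  simp only [hamValues, ham_of_eq_sub_one, Set.mem_ofPred_eq, Set.mem_singleton_iff]
  exact ⟨fun ⟨_, _, hx⟩ => hx, fun hx => ⟨fun _ => 1, fun _ => Or.inl rfl, hx⟩⟩

theorem hamValues_add_one (hn : ℓ - 1 ≤ n) :
    hamValues J h ℓ (n + 1) a b
      = (· + (J * b + h (n + 1))) '' hamValues J h ℓ n a 1
        ∪ (· - (J * b + h (n + 1))) '' hamValues J h ℓ n a (-1) := by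
  have hupdate : ∀ s, (s = 1 ∨ s = -1) → ∀ σ : ℤ → ℝ, (∀ m, σ m = 1 ∨ σ m = -1) →
      ham J h ℓ n a s σ + (J * b + h (n + 1)) * s ∈ hamValues J h ℓ (n + 1) a b := by
    intro s hs σ hσ
    refine ⟨Function.update σ (n + 1) s, fun m => ?_, ?_⟩
    · rcases eq_or_ne m (n + 1) with rfl | hm
      · simpa using hs
      · simpa [hm] using hσ m
    · have hbulk : ham J h ℓ n a s (Function.update σ (n + 1) s) = ham J h ℓ n a s σ :=
        ham_congr J h ℓ n a s fun m hm =>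
          Function.update_of_ne (by rw [Finset.mem_Icc] at hm; omega) _ _
      rw [ham_add_one J h ℓ n a b hn, Function.update_self, hbulk]
  ext x
  constructor
  · rintro ⟨σ, hσ, rfl⟩
    rw [ham_add_one J h ℓ n a b hn]
    rcases hσ (n + 1) with hs | hs <;> rw [hs]
    · exact Or.inl ⟨_, ⟨σ, hσ, rfl⟩, by ring⟩
    · exact Or.inr ⟨_, ⟨σ, hσ, rfl⟩, by ring⟩
  · rintro (⟨_, ⟨σ, hσ, rfl⟩, rfl⟩ | ⟨_, ⟨σ, hσ, rfl⟩, rfl⟩)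
    · simpa using hupdate 1 (Or.inl rfl) σ hσ
    · simpa [sub_eq_add_neg] using hupdate (-1) (Or.inr rfl) σ hσ

theorem hamValues_finite (hn : ℓ - 1 ≤ n) : (hamValues J h ℓ n a b).Finite := by
  induction n, hn using Int.leInduction generalizing b with
  | base => simp [hamValues_of_eq_sub_one]
  | succ n hn ih =>
    rw [hamValues_add_one J h ℓ n a b hn]
    exact ((ih 1).image _).union ((ih (-1)).image _)

theorem maxHam_of_eq_sub_one : maxHam J h ℓ (ℓ - 1) a b = J * (a * b) := by
  rw [maxHam_eq_sSup_hamValues, hamValues_of_eq_sub_one, csSup_singleton]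

theorem maxHam_add_one (hn : ℓ - 1 ≤ n) :
    maxHam J h ℓ (n + 1) a b
      = max (maxHam J h ℓ n a 1 + (J * b + h (n + 1)))
          (maxHam J h ℓ n a (-1) - (J * b + h (n + 1))) := by
  have hfin : ∀ s, (hamValues J h ℓ n a s).Finite := fun s => hamValues_finite J h ℓ n a s hn
  have hbdd : ∀ s, BddAbove (hamValues J h ℓ n a s) := fun s => (hfin s).bddAbove
  rw [maxHam_eq_sSup_hamValues, hamValues_add_one J h ℓ n a b hn,
    csSup_union ((hfin 1).image _).bddAbove ((hamValues_nonempty ..).image _)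
      ((hfin (-1)).image _).bddAbove ((hamValues_nonempty ..).image _),
    csSup_image_add_const (hamValues_nonempty ..) (hbdd 1),
    csSup_image_sub_const (hamValues_nonempty ..) (hbdd (-1))]
  rfl

theorem maxHam_sub_maxHam_add_one (hJ : 0 ≤ J) (hn : ℓ - 1 ≤ n) :
    maxHam J h ℓ (n + 1) a 1 - maxHam J h ℓ (n + 1) a (-1)
      = hatb (2 * J) (maxHam J h ℓ n a 1 - maxHam J h ℓ n a (-1) + 2 * h (n + 1)) := by
  rw [maxHam_add_one J h ℓ n a 1 hn, maxHam_add_one J h ℓ n a (-1) hn,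
    hatb_two_mul_eq_max_sub_max hJ, mul_one, mul_neg_one]

end IsingChain

theorem stmt_18_general (J : ℝ) (hJ : 0 < J) (Γ : ℝ) (hΓ : Γ = 2 * J)
    (h : ℤ → ℝ) (ℓ : ℤ) (a : ℝ)
    (lhat : ℕ → ℝ) (hinit : lhat 0 = a * Γ)
    (hrec : ∀ k : ℕ, lhat (k + 1) = hatb Γ (lhat k + 2 * h (ℓ + (k : ℤ))))
    (k : ℕ) :
    lhat k = maxHam J h ℓ (ℓ - 1 + (k : ℤ)) a 1 - maxHam J h ℓ (ℓ - 1 + (k : ℤ)) a (-1) := by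
  induction k with
  | zero =>
    rw [hinit, hΓ, Nat.cast_zero, add_zero, maxHam_of_eq_sub_one, maxHam_of_eq_sub_one]
    ring
  | succ k ih =>
    rw [hrec, ih, hΓ, Nat.cast_succ, ← add_assoc,
      maxHam_sub_maxHam_add_one J h ℓ _ a hJ.le (by omega),
      show ℓ - 1 + (k : ℤ) + 1 = ℓ + k by ring]

/-- Zero-temperature identity: the hard-wall recursion started at `aΓ` computes the
difference of the maximal Hamiltonian values with `+` and `−` right boundary spin:
`\widehat{l}_{ℓ, ℓ-1+k}^{(a)} = max_σ H^{a+}_{ℓ, ℓ-1+k} − max_σ H^{a−}_{ℓ, ℓ-1+k}`. -/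
theorem stmt_18 (J : ℝ) (hJ : 0 < J) (Γ : ℝ) (hΓ : Γ = 2 * J)
    (h : ℤ → ℝ) (ℓ : ℤ) (a : ℝ) (ha : a = 1 ∨ a = -1)
    (lhat : ℕ → ℝ) (hinit : lhat 0 = a * Γ)
    (hrec : ∀ k : ℕ, lhat (k + 1) = hatb Γ (lhat k + 2 * h (ℓ + (k : ℤ))))
    (k : ℕ) :
    lhat k = maxHam J h ℓ (ℓ - 1 + (k : ℤ)) a 1 - maxHam J h ℓ (ℓ - 1 + (k : ℤ)) a (-1) :=
  stmt_18_general J hJ Γ hΓ h ℓ a lhat hinit hrec k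
end
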